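/- Let G be a finite group with normal p-complement N, p odd, x ∈ G a p-element, and P ∈ Syl_p(G) with x ∈ P. Then x ∈ Z(Sub_G(x)) if and only if x ∈ Z(P); and ⟨x⟩ ⊴ Sub_G(x) if and only if ⟨x⟩ ⊴ P. -/

import Mathlib

/-- `H` is a normal subgroup of `K` (in particular `H ≤ K`). -/
def normalIn {G : Type*} [Group G] (H K : Subgroup G) : Prop :=
  H ≤ K ∧ ∀ k ∈ K, ∀ h ∈ H, k * h * k⁻¹ ∈ H

/-- `H` is subnormal in `K`: there is a chain `H = H₀ ⊴ H₁ ⊴ ⋯ ⊴ Hₙ = K`. -/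
def subnormalIn {G : Type*} [Group G] (H K : Subgroup G) : Prop :=
  ∃ n : ℕ, ∃ f : Fin (n + 1) → Subgroup G,
    f 0 = H ∧ f (Fin.last n) = K ∧ ∀ i : Fin n, normalIn (f i.castSucc) (f i.succ)

/-- The subnormalizer subset `S_G(x) = {y ∈ G : ⟨x⟩ is subnormal in ⟨x, y⟩}`. -/
def subnSet {G : Type*} [Group G] (x : G) : Set G :=
  {y | subnormalIn (Subgroup.zpowers x) (Subgroup.closure {x, y})}

/-- The subnormalizer `Sub_G(x) = ⟨S_G(x)⟩`. -/
def SubG {G : Type*} [Group G] (x : G) : Subgroup G :=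
  Subgroup.closure (subnSet x)

/-!
If `⟨x⟩` is subnormal in `H = ⟨x, y⟩`, then `x` centralizes the `p'`-group `N ∩ H`: along a
subnormal chain, a commutator `c = [m, x]` with `m ∈ N` lands one step lower, so it commutes
with `x` by induction, and then `m x m⁻¹ = c x` forces `c ^ p ^ n = 1`, whence `c = 1` by
coprimality. As `H / (N ∩ H)` is a `p`-group, `y = q a` with `a ∈ N ∩ H` and `q` in a Sylow
`p`-subgroup of `H` through `x`. That Sylow subgroup lies in a Sylow subgroup `R` of `G`
through `x`, and `R = m • P` with `m ∈ N`; this `m` centralizes `x` since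
`x⁻¹ (m⁻¹ x m) ∈ P ∩ N = 1`. Hence `S_G(x) ⊆ C_G(x) P C_G(x)`, while `P ⊆ S_G(x)` because
subgroups of `p`-groups are subnormal. So a subgroup containing `C_G(x)` contains `Sub_G(x)`
iff it contains `P`; apply this to `C_G(x)` and to `N_G(⟨x⟩)`.
-/

open Subgroup
open scoped Pointwise

section Subnormal

variable {G : Type*} [Group G]

lemma subnormalIn_refl (A : Subgroup G) : subnormalIn A A :=
  ⟨0, fun _ => A, rfl, rfl, fun i => i.elim0⟩

lemma subnormalIn.trans_normalIn {A K L : Subgroup G} (hAK : subnormalIn A K)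
    (hKL : normalIn K L) : subnormalIn A L := by
  obtain ⟨n, f, h0, hn, hf⟩ := hAK
  refine ⟨n + 1, Fin.snoc f L, ?_, Fin.snoc_last _ _, fun i => ?_⟩
  · rw [← Fin.castSucc_zero, Fin.snoc_castSucc, h0]
  induction i using Fin.lastCases with
  | last => rwa [Fin.succ_last, Fin.snoc_last, Fin.snoc_castSucc, hn]
  | cast j => rw [Fin.succ_castSucc, Fin.snoc_castSucc, Fin.snoc_castSucc]; exact hf j

lemma subnormalIn.induction {A : Subgroup G} {motive : Subgroup G → Prop} (refl : motive A)
    (step : ∀ K L, subnormalIn A K → normalIn K L → motive K → motive L) {B : Subgroup G}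
    (hAB : subnormalIn A B) : motive B := by
  obtain ⟨n, f, h0, hn, hf⟩ := hAB
  induction n generalizing B with
  | zero => exact hn ▸ h0 ▸ refl
  | succ n ih =>
    have hKB : normalIn (f (Fin.last n).castSucc) B := by
      simpa only [Fin.succ_last, hn] using hf (Fin.last n)
    exact step _ B ⟨n, fun i => f i.castSucc, h0, rfl, fun i => hf i.castSucc⟩ hKB
      (ih (fun i => f i.castSucc) h0 rfl fun i => hf i.castSucc)

lemma subnormalIn.le {A B : Subgroup G} (h : subnormalIn A B) : A ≤ B :=
  h.induction le_rfl fun _ _ _ hKL hAK => hAK.trans hKL.1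

lemma normalIn.map {G' : Type*} [Group G'] (φ : G →* G') {K L : Subgroup G}
    (h : normalIn K L) : normalIn (K.map φ) (L.map φ) := by
  refine ⟨map_mono h.1, ?_⟩
  rintro _ ⟨l, hl, rfl⟩ _ ⟨k, hk, rfl⟩
  exact ⟨l * k * l⁻¹, h.2 l hl k hk, by simp⟩

lemma subnormalIn.map {G' : Type*} [Group G'] (φ : G →* G') {A B : Subgroup G}
    (h : subnormalIn A B) : subnormalIn (A.map φ) (B.map φ) :=
  h.induction (motive := fun K => subnormalIn (A.map φ) (K.map φ)) (subnormalIn_refl _)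
    fun _ _ _ hKL h => h.trans_normalIn (hKL.map φ)

lemma subnormalIn_top_of_normalizerCondition [Finite G] (hG : NormalizerCondition G)
    (A : Subgroup G) : subnormalIn A ⊤ := by
  suffices ∀ B, subnormalIn A B → subnormalIn A ⊤ from this A (subnormalIn_refl A)
  intro B
  induction B using WellFoundedGT.induction with
  | _ B ih =>
    intro hAB
    rcases eq_or_lt_of_le (le_top : B ≤ ⊤) with rfl | hB
    · exact hAB
    · have hBN : normalIn B (normalizer (B : Set G)) :=
        ⟨le_normalizer, fun k hk h hh => (mem_normalizer_iff.mp hk h).mp hh⟩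
      exact ih _ (hG B hB) (hAB.trans_normalIn hBN)

lemma subnormalIn_of_isPGroup [Finite G] {p : ℕ} [Fact p.Prime] {A H : Subgroup G}
    (hH : IsPGroup p H) (hAH : A ≤ H) : subnormalIn A H := by
  have := hH.isNilpotent
  simpa [subgroupOf_map_subtype, inf_of_le_left hAH, ← MonoidHom.range_eq_map] using
    (subnormalIn_top_of_normalizerCondition Group.normalizerCondition_of_isNilpotent
      (A.subgroupOf H)).map H.subtype

end Subnormal

section Coprime

variable {G : Type*} [Group G] {p : ℕ} {N : Subgroup G}

lemma eq_one_of_mem_of_pow_eq_one (hpN : p.Coprime (Nat.card N)) {g : G} (hg : g ∈ N) {n : ℕ}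
    (h : g ^ p ^ n = 1) : g = 1 :=
  orderOf_eq_one_iff.mp <| Nat.eq_one_of_dvd_coprimes (hpN.pow_left n)
    (orderOf_dvd_of_pow_eq_one h) (N.orderOf_dvd_natCard hg)

variable [N.Normal] (hpN : p.Coprime (Nat.card N)) {x : G} {n : ℕ} (hx : x ^ p ^ n = 1)
include hpN hx

lemma commute_of_normalIn {K L : Subgroup G} (hxK : x ∈ K) (hKL : normalIn K L)
    (hK : ∀ c ∈ N ⊓ K, Commute x c) : ∀ m ∈ N ⊓ L, Commute x m := by
  rintro m ⟨hmN, hmL⟩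
  set c := m * x * m⁻¹ * x⁻¹
  have hcK : c ∈ K := K.mul_mem (hKL.2 m hmL x hxK) (K.inv_mem hxK)
  have hcN : c ∈ N := by
    simpa only [c, mul_assoc] using N.mul_mem hmN (Normal.conj_mem ‹_› _ (N.inv_mem hmN) x)
  have hxc : Commute x c := hK c ⟨hcN, hcK⟩
  have hconj : m * x * m⁻¹ = c * x := by simp [c]
  have hc : c ^ p ^ n = 1 :=
    calc c ^ p ^ n = (c * x) ^ p ^ n := by rw [hxc.symm.mul_pow, hx, mul_one]
    _ = 1 := by rw [← hconj, conj_pow, hx, mul_one, mul_inv_cancel]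
  rw [eq_one_of_mem_of_pow_eq_one hpN hcN hc, one_mul] at hconj
  exact (mul_inv_eq_iff_eq_mul.mp hconj).symm

lemma commute_of_subnormalIn {H : Subgroup G} (h : subnormalIn (zpowers x) H) :
    ∀ m ∈ N ⊓ H, Commute x m :=
  h.induction (fun _ hc => by obtain ⟨k, rfl⟩ := mem_zpowers_iff.mp hc.2; exact .self_zpow x k)
    fun _ _ hK hKL ih => commute_of_normalIn hpN hx (hK.le (mem_zpowers x)) hKL ih

end Coprime

section Sylow

variable {Γ Γ' : Type*} [Group Γ] [Group Γ'] [Finite Γ] {p : ℕ} [Fact p.Prime]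

lemma Sylow.map_eq_range_of_isPGroup {f : Γ →* Γ'} (hf : IsPGroup p f.range) (Q : Sylow p Γ) :
    (Q : Subgroup Γ).map f = f.range := by
  have htop : ⊤ = (Q : Subgroup Γ).map f.rangeRestrict :=
    (Q.mapSurjective f.rangeRestrict_surjective).is_maximal' (hf.to_subgroup ⊤) le_top
  calc (Q : Subgroup Γ).map f = ((Q : Subgroup Γ).map f.rangeRestrict).map f.range.subtype := by
        rw [map_map, f.subtype_comp_rangeRestrict]
  _ = f.range := by rw [← htop, ← MonoidHom.range_eq_map, range_subtype]

lemma Sylow.exists_commute_smul_eq {N : Subgroup Γ} [N.Normal] (hquot : IsPGroup p (Γ ⧸ N))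
    (hpN : p.Coprime (Nat.card N)) {x : Γ} {P R : Sylow p Γ} (hxP : x ∈ P) (hxR : x ∈ R) :
    ∃ m, Commute m x ∧ m • P = R := by
  obtain ⟨g, rfl⟩ := MulAction.exists_smul_eq Γ P R
  have hg : (g : Γ ⧸ N) ∈ (P : Subgroup Γ).map (QuotientGroup.mk' N) := by
    rw [P.map_eq_range_of_isPGroup (hquot.to_subgroup _)]
    exact ⟨g, rfl⟩
  obtain ⟨s, hs, hsg⟩ := hg
  set m := g / s
  have hm : m ∈ N := QuotientGroup.eq_iff_div_mem.mp hsg.symm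
  have hgm : g • P = m • P := by
    rw [show g = m * s by simp [m], mul_smul,
      Sylow.smul_eq_iff_mem_normalizer.mpr (le_normalizer hs)]
  rw [hgm] at hxR ⊢
  have hxR' : x ∈ MulAut.conj m • (P : Subgroup Γ) := by
    rw [← Sylow.coe_subgroup_smul]; exact hxR
  obtain ⟨t, ht, rfl⟩ := (mem_smul_pointwise_iff_exists _ _ _).mp hxR'
  simp only [MulAut.smul_def, MulAut.conj_apply] at hxP ⊢
  have hinN : (m * t * m⁻¹)⁻¹ * t ∈ N := by
    simpa [mul_assoc] using N.mul_mem hm (Normal.conj_mem ‹_› _ (N.inv_mem hm) t⁻¹)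
  have hinP : (m * t * m⁻¹)⁻¹ * t ∈ (P : Subgroup Γ) := P.1.mul_mem (P.1.inv_mem hxP) ht
  have htx : m * t * m⁻¹ = t := inv_mul_eq_one.mp <|
    disjoint_def.mp (P.isPGroup'.disjoint_of_coprime IsPGroup.card hpN) hinP hinN
  rw [htx]
  exact ⟨m, mul_inv_eq_iff_eq_mul.mp htx, rfl⟩

end Sylow

section Subnormalizer

variable {G : Type*} [Group G] [Finite G] {p : ℕ} [Fact p.Prime] {x : G}

lemma Sylow.le_SubG {P : Sylow p G} (hxP : x ∈ P) : (P : Subgroup G) ≤ SubG x := by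
  intro y hy
  have hxy : closure {x, y} ≤ (P : Subgroup G) :=
    (closure_le _).mpr (Set.insert_subset_iff.mpr ⟨hxP, Set.singleton_subset_iff.mpr hy⟩)
  exact subset_closure <| subnormalIn_of_isPGroup (P.isPGroup'.to_le hxy)
    (zpowers_le.mpr (subset_closure (Set.mem_insert x {y})))

variable {N : Subgroup G} [N.Normal] (hpN : p.Coprime (Nat.card N))
  (hquot : IsPGroup p (G ⧸ N)) {n : ℕ} (hx : x ^ p ^ n = 1) {P : Sylow p G} (hxP : x ∈ P)
include hpN hquot hx hxP

theorem exists_eq_mul_mul_of_mem_subnSet {y : G} (hy : y ∈ subnSet x) :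
    ∃ c d, Commute c x ∧ Commute d x ∧ ∃ s ∈ (P : Subgroup G), y = c * s * d := by
  set H := closure {x, y}
  have hxH : x ∈ H := subset_closure (Set.mem_insert _ _)
  have hyH : y ∈ H := subset_closure (Set.mem_insert_of_mem _ rfl)
  have hpx : IsPGroup p (zpowers (⟨x, hxH⟩ : H)) := IsPGroup.of_card_dvd_pow (n := n) <| by
    rw [Nat.card_zpowers, orderOf_mk]; exact orderOf_dvd_of_pow_eq_one hx
  obtain ⟨Q, hxQ⟩ := hpx.exists_le_sylow
  obtain ⟨q, hqQ, hqy⟩ : (QuotientGroup.mk' N).comp H.subtype ⟨y, hyH⟩ ∈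
      (Q : Subgroup H).map ((QuotientGroup.mk' N).comp H.subtype) := by
    rw [Q.map_eq_range_of_isPGroup (hquot.to_subgroup _)]; exact ⟨_, rfl⟩
  have ha : (q : G)⁻¹ * y ∈ N ⊓ H := ⟨QuotientGroup.eq.mp hqy, H.mul_mem (H.inv_mem q.2) hyH⟩
  obtain ⟨R, hQR⟩ := (Q.isPGroup'.map H.subtype).exists_le_sylow
  obtain ⟨m, hmx, rfl⟩ :=
    P.exists_commute_smul_eq hquot hpN hxP (hQR ⟨_, hxQ (mem_zpowers _), rfl⟩)
  have hq : (q : G) ∈ MulAut.conj m • (P : Subgroup G) := by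
    rw [← Sylow.coe_subgroup_smul]; exact hQR ⟨q, hqQ, rfl⟩
  obtain ⟨s, hs, hsq⟩ := (mem_smul_pointwise_iff_exists _ _ _).mp hq
  refine ⟨m, m⁻¹ * ((q : G)⁻¹ * y), hmx,
    hmx.inv_left.mul_left (commute_of_subnormalIn hpN hx hy _ ha).symm, s, hs, ?_⟩
  rw [MulAut.smul_def, MulAut.conj_apply] at hsq
  rw [← mul_assoc, ← hsq]
  group

theorem SubG_le_iff {K : Subgroup G} (hK : centralizer {x} ≤ K) :
    SubG x ≤ K ↔ (P : Subgroup G) ≤ K := by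
  refine ⟨(P.le_SubG hxP).trans, fun hPK => (closure_le _).mpr fun y hy => ?_⟩
  obtain ⟨c, d, hc, hd, s, hs, rfl⟩ := exists_eq_mul_mul_of_mem_subnSet hpN hquot hx hxP hy
  have hmem {g : G} (hg : Commute g x) : g ∈ K := hK (mem_centralizer_singleton_iff.mpr hg.eq)
  exact K.mul_mem (K.mul_mem (hmem hc) (hPK hs)) (hmem hd)

end Subnormalizer

section Conjugation

variable {G : Type*} [Group G] (K : Subgroup G) (x : G)

lemma forall_mul_comm_iff_le_centralizer :
    (∀ s ∈ K, s * x = x * s) ↔ K ≤ centralizer {x} := by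
  simp [SetLike.le_def, mem_centralizer_singleton_iff, eq_comm]

lemma centralizer_le_normalizer_zpowers : centralizer {x} ≤ normalizer (zpowers x : Set G) := by
  rw [zpowers_eq_closure, ← centralizer_closure]
  exact centralizer_le_normalizer _

lemma forall_conj_mem_zpowers_iff_le_normalizer [Finite G] :
    (∀ s ∈ K, s * x * s⁻¹ ∈ zpowers x) ↔ K ≤ normalizer (zpowers x : Set G) := by
  refine ⟨fun h s hs => mem_normalizer_fintype ?_,
    fun h s hs => (mem_normalizer_iff.mp (h hs) x).mp (mem_zpowers x)⟩
  rintro _ ⟨k, rfl⟩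
  simpa only [conj_zpow, SetLike.mem_coe] using zpow_mem (h s hs) k

end Conjugation

theorem stmt_19_general {G : Type*} [Group G] [Finite G] (p : ℕ) (hp : p.Prime)
    (N : Subgroup G) (hN : N.Normal) (hN' : ¬ p ∣ Nat.card N)
    (hquot : IsPGroup p (G ⧸ N))
    (x : G) (hx : ∃ n : ℕ, orderOf x = p ^ n)
    (P : Sylow p G) (hxP : x ∈ P) :
    ((∀ s ∈ SubG x, s * x = x * s) ↔ ∀ s ∈ (P : Subgroup G), s * x = x * s) ∧
    ((∀ s ∈ SubG x, s * x * s⁻¹ ∈ Subgroup.zpowers x) ↔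
      ∀ s ∈ (P : Subgroup G), s * x * s⁻¹ ∈ Subgroup.zpowers x) := by
  have := Fact.mk hp
  have hpN : p.Coprime (Nat.card N) := hp.coprime_iff_not_dvd.mpr hN'
  obtain ⟨n, hn⟩ := hx
  have hxn : x ^ p ^ n = 1 := hn ▸ pow_orderOf_eq_one x
  simp only [forall_mul_comm_iff_le_centralizer, forall_conj_mem_zpowers_iff_le_normalizer]
  exact ⟨SubG_le_iff hpN hquot hxn hxP le_rfl,
    SubG_le_iff hpN hquot hxn hxP (centralizer_le_normalizer_zpowers x)⟩

theorem stmt_19 {G : Type*} [Group G] [Finite G] (p : ℕ) (hp : p.Prime) (hodd : Odd p)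
    (N : Subgroup G) (hN : N.Normal) (hN' : ¬ p ∣ Nat.card N)
    (hquot : IsPGroup p (G ⧸ N))
    (x : G) (hx : ∃ n : ℕ, orderOf x = p ^ n)
    (P : Sylow p G) (hxP : x ∈ P) :
    ((∀ s ∈ SubG x, s * x = x * s) ↔ ∀ s ∈ (P : Subgroup G), s * x = x * s) ∧
    ((∀ s ∈ SubG x, s * x * s⁻¹ ∈ Subgroup.zpowers x) ↔
      ∀ s ∈ (P : Subgroup G), s * x * s⁻¹ ∈ Subgroup.zpowers x) :=
  stmt_19_general p hp N hN hN' hquot x hx P hxP
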